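/- arXiv:1011.2590 — 2 statements merged into one kernel-verified Lean document; each statement's English description precedes it below -/
import Mathlib

section
/- For every sequence S ∈ A, E[R_S] = WEIGHT(G(S)). -/
open Finset MeasureTheory ProbabilityTheory

noncomputable section

/-- The set of sequences `S = (S_1, …, S_{2m})` of pairs `S_j = (S_{j,1}, S_{j,2})` of
integers with `1 ≤ S_{j,1} < S_{j,2} ≤ d` (realized as elements of `Fin d`). -/
def Seqs (d m : ℕ) : Set (Fin (2*m) → Fin d × Fin d) :=
  {S | ∀ j, (S j).1 < (S j).2}

/-- The simple graph underlying the multigraph `G(S)`: `a ≠ b` are adjacent iff some pair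
of the sequence `S` equals `(a,b)` or `(b,a)`. -/
def graphOf {d m : ℕ} (S : Fin (2*m) → Fin d × Fin d) : SimpleGraph (Fin d) where
  Adj a b := a ≠ b ∧ ∃ j, S j = (a, b) ∨ S j = (b, a)
  symm := ⟨fun _ _ ⟨hab, j, h⟩ => ⟨hab.symm, j, h.symm⟩⟩
  loopless := ⟨fun _ ⟨h, _⟩ => h rfl⟩

/-- `Ver(G(S))`: the set of integers occurring in the sequence `S`, i.e. the vertices of
`G(S)` (all of which have positive degree). -/
def Ver {d m : ℕ} (S : Fin (2*m) → Fin d × Fin d) : Finset (Fin d) :=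
  univ.filter (fun v => ∃ j, (S j).1 = v ∨ (S j).2 = v)

/-- The degree of `v` in the multigraph `G(S)`: the number of pairs `(j,a)` with
`S_{j,a} = v`. -/
def deg {d m : ℕ} (S : Fin (2*m) → Fin d × Fin d) (v : Fin d) : ℕ :=
  (univ.filter (fun j => (S j).1 = v)).card + (univ.filter (fun j => (S j).2 = v)).card

open scoped Classical in
/-- The number of connected components of the multigraph `G(S)`, i.e. the number of
connected components of the underlying simple graph that meet `Ver(G(S))`. -/
def numComp {d m : ℕ} (S : Fin (2*m) → Fin d × Fin d) : ℕ :=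
  ((Ver S).image (fun v => (graphOf S).connectedComponentMk v)).card

/-- `[i] = {1, …, i}`, realized as the first `i` elements of `Fin d`. -/
def seg (d i : ℕ) : Finset (Fin d) := univ.filter (fun v => (v : ℕ) < i)

/-- `W_{Q,t}`: the set of sequences `S` with `Ver(G(S)) = Q`, all degrees of `G(S)`
positive and even, and `G(S)` having exactly `t` connected components. -/
def W (d m : ℕ) (Q : Finset (Fin d)) (t : ℕ) : Set (Fin (2*m) → Fin d × Fin d) :=
  {S | S ∈ Seqs d m ∧ Ver S = Q ∧ (∀ v ∈ Ver S, 0 < deg S v ∧ Even (deg S v)) ∧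
    numComp S = t}

open scoped Classical in
/-- The vertex set of the connected component `c` of the multigraph `G(S)`. -/
def compVer {d m : ℕ} (S : Fin (2*m) → Fin d × Fin d)
    (c : (graphOf S).ConnectedComponent) : Finset (Fin d) :=
  (Ver S).filter (fun v => (graphOf S).connectedComponentMk v = c)

open scoped Classical in
/-- `WEIGHT(G(S))`: the product over the connected components `G_c` of `G(S)` of
`WEIGHT(G_c)`, where `WEIGHT(G_c) = 0` if `G_c` has a vertex of odd degree, and
`WEIGHT(G_c) = k^{-(|V_c|-1)} · Π_{v ∈ V_c} x_v^{deg(v)}` otherwise. -/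
def WEIGHT {d m : ℕ} (k : ℕ) (x : Fin d → ℝ) (S : Fin (2*m) → Fin d × Fin d) : ℝ :=
  ∏ c ∈ (Ver S).image (fun v => (graphOf S).connectedComponentMk v),
    if ∀ v ∈ compVer S c, Even (deg S v) then
      ((k : ℝ) ^ ((compVer S c).card - 1))⁻¹ * ∏ v ∈ compVer S c, x v ^ deg S v
    else 0

/-- `SQUARES(V) = Π_{v ∈ V} x_v²`. -/
def SQUARES {d : ℕ} (x : Fin d → ℝ) (V : Finset (Fin d)) : ℝ := ∏ v ∈ V, x v ^ 2

/-- `Z = Σ_{t=1}^k Σ_{i≠j∈[d]} x_i x_j ζ_i ζ_j 1{H(i)=H(j)=t}`. -/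
def Z {d k : ℕ} {Ω : Type} (x : Fin d → ℝ) (ζ : Ω → Fin d → ℝ)
    (H : Ω → Fin d → Fin k) (ω : Ω) : ℝ :=
  ∑ t : Fin k, ∑ i : Fin d, ∑ j : Fin d,
    if i ≠ j ∧ H ω i = t ∧ H ω j = t then x i * x j * ζ ω i * ζ ω j else 0

/-- The random variable
`R_S = Π_{j=1}^{2m} (x_{S_{j,1}} x_{S_{j,2}} ζ_{S_{j,1}} ζ_{S_{j,2}} Σ_{t=1}^k 1{H(S_{j,1}) = H(S_{j,2}) = t})`. -/
def R {d k m : ℕ} {Ω : Type} (x : Fin d → ℝ) (ζ : Ω → Fin d → ℝ)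
    (H : Ω → Fin d → Fin k) (S : Fin (2*m) → Fin d × Fin d) (ω : Ω) : ℝ :=
  ∏ j : Fin (2*m),
    (x (S j).1 * x (S j).2 * ζ ω (S j).1 * ζ ω (S j).2 *
      ∑ t : Fin k, if H ω (S j).1 = t ∧ H ω (S j).2 = t then (1:ℝ) else 0)

/-- The family of random variables `f 1, …, f d` is `n`-wise independent: every subfamily
consisting of at most `n` of them is (jointly) independent. -/
def KWiseIndep {d : ℕ} {Ω β : Type} [MeasurableSpace Ω] [mβ : MeasurableSpace β]
    (n : ℕ) (f : Fin d → Ω → β) (μ : Measure Ω) : Prop :=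
  ∀ s : Finset (Fin d), s.card ≤ n →
    iIndepFun (m := fun _ : s => mβ) (fun i : s => f i) μ

/-!
Expanding the product, `R_S = (∏ᵥ x_v ^ deg v) · (∏ᵥ ζ_v ^ deg v) · 1{H is constant along every
edge of G(S)}`. The middle factor is a function of `ζ` and the last one of `H`, so their means
multiply. As `G(S)` has at most `4m` vertices, the `ζ_v` are independent Rademacher variables on
them, and the mean of the middle factor is `1` if all degrees are even and `0` otherwise.
`H` is constant along the edges iff it is constant on each connected component; for each of the
`k ^ #components` ways of labelling the components, the event that `H` follows the labelling has
probability `k ^ (-|V|)`, and these events are disjoint. Hence the last factor has mean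
`k ^ (#components - |V|) = ∏_c k ^ (-(|V_c| - 1))`.
-/

theorem SimpleGraph.Reachable.apply_eq_of_forall_adj {V β : Type*} {G : SimpleGraph V}
    {F : V → β} (hF : ∀ a b, G.Adj a b → F a = F b) {u v : V} (h : G.Reachable u v) :
    F u = F v := by
  rw [SimpleGraph.reachable_iff_reflTransGen] at h
  induction h with
  | refl => rfl
  | tail _ hab ih => exact ih.trans (hF _ _ hab)

lemma ProbabilityTheory.iIndepFun.measure_exists_factor_eq {Ω ι κ β : Type*}
    [MeasurableSpace Ω] {μ : Measure Ω} [Fintype ι] [Fintype κ] [Fintype β]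
    [MeasurableSpace β] [MeasurableSingletonClass β] {X : ι → Ω → β} (hX : iIndepFun X μ)
    (hXm : ∀ i, Measurable (X i)) {q : ENNReal} (hq : ∀ i b, μ {ω | X i ω = b} = q)
    {p : ι → κ} (hp : Function.Surjective p) :
    μ {ω | ∃ f : κ → β, ∀ i, X i ω = f (p i)} =
      Fintype.card β ^ Fintype.card κ * q ^ Fintype.card ι := by
  classical
  set E : (κ → β) → Set Ω := fun f => ⋂ i, X i ⁻¹' {f (p i)}
  have hE : {ω | ∃ f : κ → β, ∀ i, X i ω = f (p i)} = ⋃ f, E f := by ext; simp [E]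
  have hEm (f : κ → β) : MeasurableSet (E f) :=
    .iInter fun i => hXm i (measurableSet_singleton _)
  have hdisj : Pairwise (Function.onFun Disjoint E) := by
    intro f g hfg
    refine Set.disjoint_left.2 fun ω hf hg => hfg (funext fun c => ?_)
    obtain ⟨i, rfl⟩ := hp c
    simp only [E, Set.mem_iInter, Set.mem_preimage, Set.mem_singleton_iff] at hf hg
    exact (hf i).symm.trans (hg i)
  have hμE (f : κ → β) : μ (E f) = q ^ Fintype.card ι := by
    rw [hX.meas_iInter fun i => ⟨{f (p i)}, measurableSet_singleton _, rfl⟩]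
    exact (prod_congr rfl fun i _ => hq i _).trans (prod_const _)
  rw [hE, measure_iUnion hdisj hEm, tsum_fintype]
  simp [hμE]

lemma integral_rademacher_pow {Ω : Type*} [MeasurableSpace Ω] {μ : Measure Ω}
    [IsProbabilityMeasure μ] {g : Ω → ℝ} (hg : Measurable g) (hv : ∀ ω, g ω = 1 ∨ g ω = -1)
    (h1 : μ {ω | g ω = 1} = 1/2) (h2 : μ {ω | g ω = -1} = 1/2) (n : ℕ) :
    ∫ ω, g ω ^ n ∂μ = if Even n then 1 else 0 := by
  have hA : MeasurableSet {ω | g ω = 1} := hg (measurableSet_singleton 1)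
  have hB : MeasurableSet {ω | g ω = -1} := hg (measurableSet_singleton (-1))
  have hsplit : (fun ω => g ω ^ n) = fun ω => {ω | g ω = 1}.indicator (fun _ => (1:ℝ)) ω +
      {ω | g ω = -1}.indicator (fun _ => (-1:ℝ) ^ n) ω := by
    funext ω
    rcases hv ω with h | h <;> simp [h, show (-1:ℝ) ≠ 1 by norm_num, show (1:ℝ) ≠ -1 by norm_num]
  rw [hsplit, integral_add ((integrable_const _).indicator hA) ((integrable_const _).indicator hB),
    integral_indicator_const _ hA, integral_indicator_const _ hB, measureReal_def,
    measureReal_def, h1, h2]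
  rcases n.even_or_odd with he | ho
  · norm_num [he, he.neg_one_pow]
  · norm_num [ho.neg_one_pow, Nat.not_even_iff_odd.2 ho]

lemma KWiseIndep.integral_prod_comp {d n : ℕ} {Ω β : Type} [MeasurableSpace Ω]
    [MeasurableSpace β] {f : Fin d → Ω → β} {μ : Measure Ω} (hf : KWiseIndep n f μ)
    (hfm : ∀ i, Measurable (f i)) {s : Finset (Fin d)} (hs : s.card ≤ n) (g : Fin d → β → ℝ)
    (hg : ∀ i, Measurable (g i)) :
    ∫ ω, ∏ i ∈ s, g i (f i ω) ∂μ = ∏ i ∈ s, ∫ ω, g i (f i ω) ∂μ := by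
  simp_rw [← prod_coe_sort s]
  exact (hf s hs).integral_fun_prod_comp (fun i => (hfm i).aemeasurable)
    (fun i => (hg i).aestronglyMeasurable)

lemma integral_prod_rademacher_pow {d n : ℕ} {Ω : Type} [MeasurableSpace Ω] {μ : Measure Ω}
    [IsProbabilityMeasure μ] {ζ : Ω → Fin d → ℝ} (hζm : Measurable ζ)
    (hζv : ∀ ω i, ζ ω i = 1 ∨ ζ ω i = -1)
    (hζu : ∀ i, μ {ω | ζ ω i = 1} = 1/2 ∧ μ {ω | ζ ω i = -1} = 1/2)
    (hζi : KWiseIndep n (fun i ω => ζ ω i) μ) {s : Finset (Fin d)} (hs : s.card ≤ n)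
    (e : Fin d → ℕ) :
    ∫ ω, ∏ v ∈ s, ζ ω v ^ e v ∂μ = if ∀ v ∈ s, Even (e v) then 1 else 0 := by
  have hζim (i : Fin d) : Measurable fun ω => ζ ω i := (measurable_pi_apply i).comp hζm
  rw [hζi.integral_prod_comp hζim hs (fun v z => z ^ e v) fun v => measurable_id.pow_const _]
  simp_rw [integral_rademacher_pow (hζim _) (fun ω => hζv ω _) (hζu _).1 (hζu _).2]
  rw [Finset.prod_boole]
  congr -- only the `Decidable` instances differ

section Multigraph

variable {d m : ℕ} (S : Fin (2*m) → Fin d × Fin d)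

lemma fst_mem_Ver (j : Fin (2*m)) : (S j).1 ∈ Ver S := mem_filter.2 ⟨mem_univ _, j, .inl rfl⟩

lemma snd_mem_Ver (j : Fin (2*m)) : (S j).2 ∈ Ver S := mem_filter.2 ⟨mem_univ _, j, .inr rfl⟩

lemma card_Ver_le : (Ver S).card ≤ 4 * m := by
  have hsub : Ver S ⊆ univ.image (fun j => (S j).1) ∪ univ.image (fun j => (S j).2) := by
    intro v hv
    obtain ⟨-, j, hj | hj⟩ := mem_filter.1 hv
    · exact mem_union_left _ (mem_image.2 ⟨j, mem_univ _, hj⟩)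
    · exact mem_union_right _ (mem_image.2 ⟨j, mem_univ _, hj⟩)
  calc (Ver S).card ≤ _ := card_le_card hsub
    _ ≤ _ := card_union_le _ _
    _ ≤ 2 * m + 2 * m := add_le_add (card_image_le.trans_eq (card_fin _))
        (card_image_le.trans_eq (card_fin _))
    _ = 4 * m := by ring

lemma prod_pairs_eq_prod_pow_deg {M : Type*} [CommMonoid M] (f : Fin d → M) :
    ∏ j, f (S j).1 * f (S j).2 = ∏ v ∈ Ver S, f v ^ deg S v := by
  have fiberwise (g : Fin (2*m) → Fin d) (hg : ∀ j, g j ∈ Ver S) :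
      ∏ j, f (g j) = ∏ v ∈ Ver S, f v ^ #{j | g j = v} := by
    rw [← prod_fiberwise_of_maps_to' (fun j _ => hg j)]
    simp_rw [prod_const]
  simp_rw [prod_mul_distrib, fiberwise _ (fst_mem_Ver S), fiberwise _ (snd_mem_Ver S),
    ← prod_mul_distrib, ← pow_add, deg]

lemma graphOf_reachable_fst_snd (j : Fin (2*m)) : (graphOf S).Reachable (S j).1 (S j).2 := by
  by_cases h : (S j).1 = (S j).2
  · rw [h]
  · exact SimpleGraph.Adj.reachable ⟨h, j, .inl rfl⟩

open scoped Classical in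
def components : Finset (graphOf S).ConnectedComponent :=
  (Ver S).image fun v => (graphOf S).connectedComponentMk v

lemma card_components : (components S).card = numComp S := rfl

open scoped Classical in
def componentOf (v : Ver S) : components S :=
  ⟨(graphOf S).connectedComponentMk v, mem_image_of_mem _ v.2⟩

lemma componentOf_surjective : Function.Surjective (componentOf S) := by
  classical
  rintro ⟨c, hc⟩
  obtain ⟨v, hv, rfl⟩ := mem_image.1 hc
  exact ⟨⟨v, hv⟩, rfl⟩

lemma mem_compVer {c : (graphOf S).ConnectedComponent} {v : Fin d} :
    v ∈ compVer S c ↔ v ∈ Ver S ∧ (graphOf S).connectedComponentMk v = c := by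
  classical
  exact mem_filter

lemma mem_components_of_mem_Ver {v : Fin d} (hv : v ∈ Ver S) :
    (graphOf S).connectedComponentMk v ∈ components S := by
  classical
  exact mem_image_of_mem _ hv

lemma sum_card_compVer : ∑ c ∈ components S, (compVer S c).card = (Ver S).card := by
  classical
  exact (card_eq_sum_card_fiberwise fun _ => mem_components_of_mem_Ver S).symm

lemma prod_prod_compVer {M : Type*} [CommMonoid M] (f : Fin d → M) :
    ∏ c ∈ components S, ∏ v ∈ compVer S c, f v = ∏ v ∈ Ver S, f v := by
  classical
  exact prod_fiberwise_of_maps_to (fun _ => mem_components_of_mem_Ver S) f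

lemma forall_pair_eq_iff_exists_factor {β : Type*} (F : Fin d → β) :
    (∀ j, F (S j).1 = F (S j).2) ↔
      ∃ f : components S → β, ∀ v : Ver S, F v = f (componentOf S v) := by
  constructor
  · intro hF
    have hadj : ∀ a b, (graphOf S).Adj a b → F a = F b := by
      rintro a b ⟨-, j, hj | hj⟩
      · simpa [hj] using hF j
      · simpa [hj] using (hF j).symm
    refine ⟨fun c => F c.1.out, fun v => ?_⟩
    exact SimpleGraph.Reachable.apply_eq_of_forall_adj hadj
      (SimpleGraph.ConnectedComponent.exact (Quot.out_eq _).symm)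
  · rintro ⟨f, hf⟩ j
    rw [hf ⟨_, fst_mem_Ver S j⟩, hf ⟨_, snd_mem_Ver S j⟩]
    exact congrArg f
      (Subtype.ext (SimpleGraph.ConnectedComponent.sound (graphOf_reachable_fst_snd S j)))

end Multigraph

lemma R_eq_prod_pow_deg {d k m : ℕ} {Ω : Type} (x : Fin d → ℝ) (ζ : Ω → Fin d → ℝ)
    (H : Ω → Fin d → Fin k) (S : Fin (2*m) → Fin d × Fin d) (ω : Ω) :
    R x ζ H S ω = (∏ v ∈ Ver S, x v ^ deg S v) *
      ((∏ v ∈ Ver S, ζ ω v ^ deg S v) *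
        if ∀ j, H ω (S j).1 = H ω (S j).2 then 1 else 0) := by
  have hcount (a b : Fin k) :
      (∑ t, if a = t ∧ b = t then (1:ℝ) else 0) = if a = b then 1 else 0 := by
    split_ifs with h
    · simp [h]
    · exact sum_eq_zero fun t _ => if_neg fun ⟨ha, hb⟩ => h (ha.trans hb.symm)
  calc R x ζ H S ω = ∏ j, (x (S j).1 * x (S j).2) * ((ζ ω (S j).1 * ζ ω (S j).2) *
        if H ω (S j).1 = H ω (S j).2 then 1 else 0) := by
        simp_rw [R, hcount, mul_assoc]
    _ = _ := by
      rw [prod_mul_distrib, prod_pairs_eq_prod_pow_deg, prod_mul_distrib,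
        prod_pairs_eq_prod_pow_deg, Fintype.prod_boole]
      congr -- only the `Decidable` instances differ

lemma integral_ite_forall_pair_eq {d k m : ℕ} {Ω : Type} [MeasurableSpace Ω] {μ : Measure Ω}
    {H : Ω → Fin d → Fin k} (hHm : Measurable H)
    (hHu : ∀ i t, μ {ω | H ω i = t} = ((k : ENNReal))⁻¹)
    (hHi : KWiseIndep (4*m) (fun i ω => H ω i) μ) (S : Fin (2*m) → Fin d × Fin d) :
    ∫ ω, (if ∀ j, H ω (S j).1 = H ω (S j).2 then 1 else 0) ∂μ =
      (k : ℝ) ^ numComp S * (k : ℝ)⁻¹ ^ (Ver S).card := by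
  set E := {ω | ∀ j, H ω (S j).1 = H ω (S j).2}
  have hE : E = {ω | ∃ f : components S → Fin k, ∀ v : Ver S, H ω v = f (componentOf S v)} := by
    ext ω
    exact forall_pair_eq_iff_exists_factor S (H ω)
  have hEm : MeasurableSet E :=
    hHm (MeasurableSet.of_discrete (s := {h : Fin d → Fin k | ∀ j, h (S j).1 = h (S j).2}))
  have hμE := (hHi _ (card_Ver_le S)).measure_exists_factor_eq
    (fun v => (measurable_pi_apply _).comp hHm) (fun v t => hHu v t) (componentOf_surjective S)
  have hind : (fun ω => if ∀ j, H ω (S j).1 = H ω (S j).2 then (1:ℝ) else 0) = E.indicator 1 := by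
    ext ω
    simp [E, Set.indicator_apply]
  rw [hind, integral_indicator_one hEm, measureReal_def, hE, hμE, Fintype.card_fin,
    Fintype.card_coe, Fintype.card_coe, card_components]
  simp

lemma WEIGHT_eq_prod_pow_deg {d m k : ℕ} (hk : k ≠ 0) (x : Fin d → ℝ)
    (S : Fin (2*m) → Fin d × Fin d) :
    WEIGHT k x S = (∏ v ∈ Ver S, x v ^ deg S v) *
      ((if ∀ v ∈ Ver S, Even (deg S v) then 1 else 0) *
        ((k : ℝ) ^ numComp S * (k : ℝ)⁻¹ ^ (Ver S).card)) := by
  classical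
  split_ifs with heven
  · have hfactor (c) (hc : c ∈ components S) :
        (if ∀ v ∈ compVer S c, Even (deg S v) then
          ((k : ℝ) ^ ((compVer S c).card - 1))⁻¹ * ∏ v ∈ compVer S c, x v ^ deg S v else 0) =
        k * (k : ℝ)⁻¹ ^ (compVer S c).card * ∏ v ∈ compVer S c, x v ^ deg S v := by
      rw [if_pos (show ∀ v ∈ compVer S c, Even (deg S v) from
        fun v hv => heven v ((mem_compVer S).1 hv).1)]
      obtain ⟨v, hv, rfl⟩ := mem_image.1 hc
      obtain ⟨n, hn⟩ :=
        Nat.exists_eq_succ_of_ne_zero (card_pos.2 ⟨v, (mem_compVer S).2 ⟨hv, rfl⟩⟩).ne'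
      rw [hn, Nat.succ_sub_one, inv_pow, pow_succ]
      field_simp
    refine (prod_congr rfl hfactor).trans ?_
    rw [prod_mul_distrib, prod_mul_distrib, prod_const,
      prod_pow_eq_pow_sum, sum_card_compVer, prod_prod_compVer, card_components]
    ring
  · push Not at heven
    obtain ⟨v, hv, hodd⟩ := heven
    rw [zero_mul, mul_zero]
    exact prod_eq_zero (mem_components_of_mem_Ver S hv)
      (if_neg fun hall => hodd (hall v ((mem_compVer S).2 ⟨hv, rfl⟩)))

theorem statement4_general (d k m : ℕ) (hk : 0 < k)
    (x : Fin d → ℝ)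
    (Ω : Type) [MeasurableSpace Ω] (μ : Measure Ω) (hμ : IsProbabilityMeasure μ)
    (ζ : Ω → Fin d → ℝ) (H : Ω → Fin d → Fin k)
    (hζm : Measurable ζ) (hHm : Measurable H)
    (hζv : ∀ ω i, ζ ω i = 1 ∨ ζ ω i = -1)
    (hζu : ∀ i, μ {ω | ζ ω i = 1} = 1/2 ∧ μ {ω | ζ ω i = -1} = 1/2)
    (hHu : ∀ i t, μ {ω | H ω i = t} = ((k : ENNReal))⁻¹)
    (hζi : KWiseIndep (4*m) (fun i ω => ζ ω i) μ)
    (hHi : KWiseIndep (4*m) (fun i ω => H ω i) μ)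
    (hζH : IndepFun ζ H μ)
    (S : Fin (2*m) → Fin d × Fin d) :
    (∫ ω, R x ζ H S ω ∂μ) = WEIGHT k x S := by
  have hsplit := hζH.integral_fun_comp_mul_comp (f := fun z => ∏ v ∈ Ver S, z v ^ deg S v)
    (g := fun h => if ∀ j, h (S j).1 = h (S j).2 then (1 : ℝ) else 0) hζm.aemeasurable
    hHm.aemeasurable
    (Finset.measurable_prod _ fun v _ => (measurable_pi_apply v).pow_const _).aestronglyMeasurable
    Measurable.of_discrete.aestronglyMeasurable
  simp_rw [R_eq_prod_pow_deg, integral_const_mul]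
  rw [hsplit, integral_prod_rademacher_pow hζm hζv hζu hζi (card_Ver_le S),
    integral_ite_forall_pair_eq hHm hHu hHi, WEIGHT_eq_prod_pow_deg hk.ne']

/-- Under the distributional assumptions of the construction (`ζ` uniform
on `{-1,1}^d` with `4m`-wise independent coordinates, `H` uniform on `[k]^d` with
`4m`-wise independent values, `ζ` independent of `H`), for every sequence `S ∈ A`,
`E[R_S] = WEIGHT(G(S))`. -/
theorem statement4 (d k m : ℕ) (hd : 0 < d) (hk : 0 < k) (hm : 0 < m)
    (x : Fin d → ℝ)
    (Ω : Type) [MeasurableSpace Ω] (μ : Measure Ω) (hμ : IsProbabilityMeasure μ)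
    (ζ : Ω → Fin d → ℝ) (H : Ω → Fin d → Fin k)
    (hζm : Measurable ζ) (hHm : Measurable H)
    (hζv : ∀ ω i, ζ ω i = 1 ∨ ζ ω i = -1)
    (hζu : ∀ i, μ {ω | ζ ω i = 1} = 1/2 ∧ μ {ω | ζ ω i = -1} = 1/2)
    (hHu : ∀ i t, μ {ω | H ω i = t} = ((k : ENNReal))⁻¹)
    (hζi : KWiseIndep (4*m) (fun i ω => ζ ω i) μ)
    (hHi : KWiseIndep (4*m) (fun i ω => H ω i) μ)
    (hζH : IndepFun ζ H μ)
    (S : Fin (2*m) → Fin d × Fin d) (hS : S ∈ Seqs d m) :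
    (∫ ω, R x ζ H S ω ∂μ) = WEIGHT k x S :=
  statement4_general d k m hk x Ω μ hμ ζ H hζm hHm hζv hζu hHu hζi hHi hζH S

end
end

section
/- Let C > 0 be a real number and suppose ‖x‖_∞ ≤ C^{−1/2}. Let i, t be positive integers with i ≤ d and let S ∈ W_{[i],t}. Then WEIGHT(G(S)) ≤ k^{−(i−t)} · C^{−(2m−i)} · SQUARES(Ver(G(S))). -/
/-! When all degrees are even, the factors `k^{-(|V_c|-1)}` of the `t` components multiply to
`k^{-(i-t)}`, since the component sizes add up to `i`. Every vertex has degree at least `2`, so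
`x_v^{deg v} ≤ C^{-(deg v - 2)/2} x_v²`, and by the handshake identity `∑ deg v = 4m` the total
excess is `∑ (deg v - 2) = 4m - 2i`. -/

open Finset MeasureTheory ProbabilityTheory

noncomputable section

theorem prod_pow_le_pow_sum_mul_prod_sq {ι : Type*} (s : Finset ι) (f : ι → ℝ) (n : ι → ℕ)
    {c : ℝ} (hf : ∀ j ∈ s, |f j| ≤ c) (hn : ∀ j ∈ s, 2 ≤ n j) :
    ∏ j ∈ s, f j ^ n j ≤ c ^ (∑ j ∈ s, (n j - 2)) * ∏ j ∈ s, f j ^ 2 := by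
  have hpoint : ∀ j ∈ s, |f j| ^ n j ≤ c ^ (n j - 2) * f j ^ 2 := fun j hj =>
    calc |f j| ^ n j = |f j| ^ (n j - 2) * |f j| ^ 2 := by
          rw [← pow_add, Nat.sub_add_cancel (hn j hj)]
      _ ≤ c ^ (n j - 2) * f j ^ 2 := by
          rw [sq_abs]
          gcongr
          exact hf j hj
  calc ∏ j ∈ s, f j ^ n j ≤ |∏ j ∈ s, f j ^ n j| := le_abs_self _
    _ = ∏ j ∈ s, |f j| ^ n j := by simp only [abs_prod, abs_pow]
    _ ≤ ∏ j ∈ s, c ^ (n j - 2) * f j ^ 2 :=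
        prod_le_prod (fun j _ => by positivity) hpoint
    _ = c ^ (∑ j ∈ s, (n j - 2)) * ∏ j ∈ s, f j ^ 2 := by
        rw [prod_mul_distrib, prod_pow_eq_pow_sum]

theorem rpow_neg_half_sq {C : ℝ} (hC : 0 ≤ C) : (C ^ (-(1/2) : ℝ)) ^ 2 = C⁻¹ := by
  rw [← Real.rpow_natCast, ← Real.rpow_mul hC]
  norm_num [Real.rpow_neg_one]

theorem card_seg {d i : ℕ} (h : i ≤ d) : (seg d i).card = i :=
  Fin.card_filter_val_lt.trans (min_eq_right h)

section Sequence

variable {d m : ℕ} (S : Fin (2*m) → Fin d × Fin d)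

theorem deg_eq_zero_of_notMem_Ver {v : Fin d} (hv : v ∉ Ver S) : deg S v = 0 := by
  simp only [Ver, mem_filter, mem_univ, true_and, not_exists, not_or] at hv
  simp [deg, filter_eq_empty_iff.mpr (fun j _ => (hv j).1),
    filter_eq_empty_iff.mpr (fun j _ => (hv j).2)]

theorem sum_deg_Ver : ∑ v ∈ Ver S, deg S v = 2 * (2 * m) := by
  rw [sum_subset (subset_univ _) fun v _ hv => deg_eq_zero_of_notMem_Ver S hv]
  simp only [deg, sum_add_distrib]
  rw [← card_eq_sum_card_fiberwise fun j _ => mem_univ (S j).1,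
    ← card_eq_sum_card_fiberwise fun j _ => mem_univ (S j).2]
  simp only [card_univ, Fintype.card_fin]
  ring

open scoped Classical in
theorem sum_card_compVer_sub_one :
    ∑ c ∈ (Ver S).image fun v => (graphOf S).connectedComponentMk v, ((compVer S c).card - 1) =
      (Ver S).card - numComp S := by
  have hmaps : ∀ v ∈ Ver S, (graphOf S).connectedComponentMk v ∈
      (Ver S).image fun v => (graphOf S).connectedComponentMk v :=
    fun v hv => mem_image_of_mem _ hv
  have hpos : ∀ c ∈ (Ver S).image fun v => (graphOf S).connectedComponentMk v,
      1 ≤ (compVer S c).card := by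
    rintro _ hc
    obtain ⟨v, hv, rfl⟩ := mem_image.mp hc
    exact card_pos.mpr ⟨v, mem_filter.mpr ⟨hv, rfl⟩⟩
  rw [sum_tsub_distrib _ hpos, card_eq_sum_card_fiberwise hmaps, sum_const, smul_eq_mul, mul_one]
  rfl

theorem numComp_le_card_Ver : numComp S ≤ (Ver S).card := by
  classical
  exact card_image_le

open scoped Classical in
theorem WEIGHT_eq_of_forall_even (k : ℕ) (x : Fin d → ℝ) (h : ∀ v ∈ Ver S, Even (deg S v)) :
    WEIGHT k x S = ((k : ℝ) ^ ((Ver S).card - numComp S))⁻¹ * ∏ v ∈ Ver S, x v ^ deg S v := by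
  refine (prod_congr rfl fun c _ => if_pos fun v hv => h v (mem_filter.mp hv).1).trans ?_
  rw [prod_mul_distrib, prod_inv_distrib, prod_pow_eq_pow_sum, sum_card_compVer_sub_one]
  congr 1
  exact prod_fiberwise_of_maps_to (fun v hv => mem_image_of_mem _ hv) _

end Sequence

theorem statement5_general (d k m i t : ℕ) (hid : i ≤ d)
    (C : ℝ) (hC : 0 < C) (x : Fin d → ℝ) (hx : ∀ v, |x v| ≤ C ^ (-(1/2) : ℝ))
    (S : Fin (2*m) → Fin d × Fin d) (hS : S ∈ W d m (seg d i) t) :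
    WEIGHT k x S ≤
      (k : ℝ) ^ (-((i : ℤ) - (t : ℤ))) * C ^ (-(2*(m : ℤ) - (i : ℤ))) *
        SQUARES x (Ver S) := by
  obtain ⟨-, hVer, hdeg, rfl⟩ := hS
  have hcard : (Ver S).card = i := hVer ▸ card_seg hid
  have hge2 : ∀ v ∈ Ver S, 2 ≤ deg S v := fun v hv => by
    obtain ⟨hpos, r, hr⟩ := hdeg v hv
    omega
  have hsum : ∑ v ∈ Ver S, (deg S v - 2) = 2 * (2 * m - i) := by
    rw [sum_tsub_distrib _ hge2, sum_deg_Ver, sum_const, hcard, smul_eq_mul]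
    omega
  have hi2m : i ≤ 2 * m := by
    have := sum_le_sum hge2
    rw [sum_const, sum_deg_Ver, hcard, smul_eq_mul] at this
    omega
  have hcomp : numComp S ≤ i := hcard ▸ numComp_le_card_Ver S
  rw [WEIGHT_eq_of_forall_even S k x fun v hv => (hdeg v hv).2, hcard]
  calc ((k : ℝ) ^ (i - numComp S))⁻¹ * ∏ v ∈ Ver S, x v ^ deg S v
      ≤ ((k : ℝ) ^ (i - numComp S))⁻¹ *
          ((C ^ (-(1/2) : ℝ)) ^ (2 * (2 * m - i)) * SQUARES x (Ver S)) := by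
        gcongr
        rw [← hsum]
        exact prod_pow_le_pow_sum_mul_prod_sq _ _ _ (fun v _ => hx v) hge2
    _ = _ := by
        rw [pow_mul, rpow_neg_half_sq hC.le, ← zpow_natCast, ← zpow_natCast, ← zpow_neg,
          inv_zpow', Nat.cast_sub hcomp, Nat.cast_sub hi2m]
        push_cast
        ring

/-- Let `C > 0` with `‖x‖_∞ ≤ C^{-1/2}`, let `i, t ≥ 1` with `i ≤ d`, and
let `S ∈ W_{[i],t}`. Then `WEIGHT(G(S)) ≤ k^{-(i-t)} · C^{-(2m-i)} · SQUARES(Ver(G(S)))`. -/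
theorem statement5 (d k m i t : ℕ) (hd : 0 < d) (hk : 0 < k) (hm : 0 < m)
    (hi : 0 < i) (ht : 0 < t) (hid : i ≤ d)
    (C : ℝ) (hC : 0 < C) (x : Fin d → ℝ) (hx : ∀ v, |x v| ≤ C ^ (-(1/2) : ℝ))
    (S : Fin (2*m) → Fin d × Fin d) (hS : S ∈ W d m (seg d i) t) :
    WEIGHT k x S ≤
      (k : ℝ) ^ (-((i : ℤ) - (t : ℤ))) * C ^ (-(2*(m : ℤ) - (i : ℤ))) *
        SQUARES x (Ver S) :=
  statement5_general d k m i t hid C hC x hx S hS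
end
end
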